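/- arXiv:math/0702083 — 6 statements merged into one kernel-verified Lean document; each statement's English description precedes it below -/
import Mathlib

section
/- Let V be a finite-dimensional vector space over a field of characteristic zero and T : V → V a unipotent automorphism (i.e., (T - id) is nilpotent). Then N := -∑_{k≥1} (1/k)(id - T)^k is a nilpotent endomorphism of V (the sum is finite), and exp(N) = T. -/
open Polynomial Finset

private lemma X_dvd_ell {K : Type*} [Field K] (m : ℕ) :
    (X : K[X]) ∣ -∑ k ∈ Icc 1 m, ((k : K)⁻¹) • (X : K[X]) ^ k := by
  rw [dvd_neg]
  apply Finset.dvd_sum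
  intro k hk
  rw [smul_eq_C_mul]
  exact Dvd.dvd.mul_left (dvd_pow_self X (by have := (Finset.mem_Icc.mp hk).1; omega)) _

private lemma key_congr {K : Type*} [Field K] [CharZero K] (m : ℕ) (hm : 1 ≤ m) :
    ∀ n < m,
      ((∑ k ∈ range m, ((Nat.factorial k : K)⁻¹) •
          (-∑ k ∈ Icc 1 m, ((k : K)⁻¹) • (X : K[X]) ^ k) ^ k) - (1 - X)).coeff n = 0 := by
  obtain ⟨m', rfl⟩ : ∃ m', m = m' + 1 := ⟨m - 1, by omega⟩
  set ℓ : K[X] := -∑ k ∈ Icc 1 (m' + 1), ((k : K)⁻¹) • (X : K[X]) ^ k with hldef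
  set E : K[X] := ∑ k ∈ range (m' + 1), ((Nat.factorial k : K)⁻¹) • ℓ ^ k with hEdef
  set G : K[X] := E - (1 - X) with hGdef
  have hXl : (X : K[X]) ∣ ℓ := X_dvd_ell (m' + 1)
  have hdl : derivative ℓ = -∑ j ∈ range (m' + 1), (X : K[X]) ^ j := by
    rw [hldef, derivative_neg, derivative_sum]
    congr 1
    rw [← Finset.Ico_add_one_right_eq_Icc, Finset.sum_Ico_eq_sum_range]
    apply Finset.sum_congr rfl
    intro j _
    rw [derivative_smul, derivative_X_pow, smul_eq_C_mul, ← mul_assoc, ← C_mul,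
      inv_mul_cancel₀ (Nat.cast_ne_zero.mpr (by omega)), C_1, one_mul]
    congr 1
    omega
  have hgeom : (1 - X) * derivative ℓ = X ^ (m' + 1) - 1 := by
    rw [hdl]
    linear_combination geom_sum_mul (X : K[X]) (m' + 1)
  have hfac : ∀ j : ℕ, ((Nat.factorial (j + 1) : K))⁻¹ * ((j + 1 : ℕ) : K) = (Nat.factorial j : K)⁻¹ := by
    intro j
    have h1 : (((j + 1 : ℕ)) : K) ≠ 0 := Nat.cast_ne_zero.mpr (by omega)
    rw [Nat.factorial_succ, Nat.cast_mul, mul_inv, mul_comm (((j + 1 : ℕ) : K))⁻¹, mul_assoc,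
      inv_mul_cancel₀ h1, mul_one]
  have hdE : derivative E =
      (∑ j ∈ range m', ((Nat.factorial j : K)⁻¹) • ℓ ^ j) * derivative ℓ := by
    rw [hEdef, derivative_sum, Finset.sum_range_succ']
    simp only [derivative_smul, derivative_pow, Nat.add_sub_cancel]
    rw [Finset.sum_mul]
    simp only [pow_zero, derivative_one, smul_zero, Nat.cast_zero, C_0, zero_mul, mul_zero,
      add_zero]
    apply Finset.sum_congr rfl
    intro j _
    rw [smul_eq_C_mul, smul_eq_C_mul, ← mul_assoc, ← mul_assoc, ← C_mul]
    rw [hfac j]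
  have hE2 : E = (∑ j ∈ range m', ((Nat.factorial j : K)⁻¹) • ℓ ^ j)
      + C ((Nat.factorial m' : K)⁻¹) * ℓ ^ m' := by
    rw [hEdef, Finset.sum_range_succ, smul_eq_C_mul]
  have Φ : (1 - X) * derivative E = (X ^ (m' + 1) - 1) * E
      - C ((Nat.factorial m' : K)⁻¹) * ((X ^ (m' + 1) - 1) * ℓ ^ m') := by
    rw [hdE]
    linear_combination (∑ j ∈ range m', ((Nat.factorial j : K)⁻¹) • ℓ ^ j) * hgeom
      - (X ^ (m' + 1) - 1) * hE2
  have hdG : derivative G = derivative E + 1 := by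
    rw [hGdef]
    simp
  have ΦG : (1 - X) * derivative G = (X ^ (m' + 1) - 1) * G + X ^ (m' + 1) * (1 - X)
      - C ((Nat.factorial m' : K)⁻¹) * ((X ^ (m' + 1) - 1) * ℓ ^ m') := by
    linear_combination Φ + (1 - X) * hdG - (X ^ (m' + 1) - 1) * hGdef
  intro n
  induction n using Nat.strong_induction_on with
  | _ n ih =>
    intro hn
    rcases Nat.eq_zero_or_pos n with rfl | hpos
    · have hl0 : ℓ.eval 0 = 0 := by
        obtain ⟨q, hq⟩ := hXl
        rw [hq]
        simp
      rw [hGdef, coeff_sub, coeff_zero_eq_eval_zero, coeff_zero_eq_eval_zero, hEdef]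
      simp [eval_finset_sum, hl0, zero_pow_eq, Finset.sum_ite_eq']
    · obtain ⟨p, rfl⟩ : ∃ p, n = p + 1 := ⟨n - 1, by omega⟩
      have hIH : ∀ j < p + 1, G.coeff j = 0 := fun j hj => ih j hj (by omega)
      have hzero : ∀ (q : K[X]) (r : ℕ), p < r → (X : K[X]) ^ r ∣ q → q.coeff p = 0 :=
        fun q r hr hd => (X_pow_dvd_iff.mp hd) p hr
      have hco : ((1 - X) * derivative G).coeff p
          = ((X ^ (m' + 1) - 1) * G + X ^ (m' + 1) * (1 - X)
            - C ((Nat.factorial m' : K)⁻¹) * ((X ^ (m' + 1) - 1) * ℓ ^ m')).coeff p := by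
        rw [ΦG]
      have hL : ((1 - X) * derivative G).coeff p = ((p : K) + 1) * G.coeff (p + 1) := by
        rw [one_sub_mul, coeff_sub, coeff_derivative]
        have hx : (X * derivative G).coeff p = 0 := by
          cases p with
          | zero => rw [coeff_X_mul_zero]
          | succ q =>
            rw [coeff_X_mul, coeff_derivative, hIH (q + 1) (by omega), zero_mul]
        rw [hx, sub_zero]
        ring
      have hR : ((X ^ (m' + 1) - 1) * G + X ^ (m' + 1) * (1 - X)
          - C ((Nat.factorial m' : K)⁻¹) * ((X ^ (m' + 1) - 1) * ℓ ^ m')).coeff p = 0 := by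
        rw [coeff_sub, coeff_add, sub_mul, coeff_sub, one_mul]
        rw [hzero _ (m' + 1) (by omega) (dvd_mul_right _ _),
          hIH p (by omega),
          hzero _ (m' + 1) (by omega) (dvd_mul_right _ _),
          hzero _ m' (by omega) (Dvd.dvd.mul_left
            (Dvd.dvd.mul_left (pow_dvd_pow_of_dvd hXl m') _) _)]
        ring
      have := hL ▸ hR ▸ hco
      have hne : ((p : K) + 1) ≠ 0 := by exact_mod_cast Nat.succ_ne_zero p
      have := mul_eq_zero.mp this
      tauto

/-- If `T` is a unipotent endomorphism (`(T - 1)^m = 0`) of a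
finite-dimensional vector space over a field of characteristic zero, then
`N := -∑_{k=1}^{m} (1/k)(1 - T)^k` is nilpotent and `exp N = T`
(the exponential being the finite sum `∑_{k<m} N^k/k!`, which suffices
since `N^m = 0`). -/
theorem unipotent_log_exp {K L : Type*} [Field K] [CharZero K]
    [AddCommGroup L] [Module K L] [FiniteDimensional K L]
    (T : Module.End K L) (hTunit : IsUnit T) (m : ℕ)
    (hT : (T - 1) ^ m = 0)
    (N : Module.End K L)
    (hN : N = - ∑ k ∈ Finset.Icc 1 m, ((k : K)⁻¹) • (1 - T) ^ k) :
    IsNilpotent N ∧ N ^ m = 0 ∧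
      ∑ k ∈ Finset.range m, ((Nat.factorial k : K)⁻¹) • N ^ k = T := by
  rcases Nat.eq_zero_or_pos m with rfl | hm
  · have h1 : (0 : Module.End K L) = 1 := by simpa using hT.symm
    have : Subsingleton (Module.End K L) := subsingleton_of_zero_eq_one h1
    exact ⟨⟨0, Subsingleton.elim _ _⟩, Subsingleton.elim _ _, Subsingleton.elim _ _⟩
  · set S : Module.End K L := 1 - T with hSdef
    have hS : S ^ m = 0 := by
      have h2 : S = -(T - 1) := by rw [hSdef, neg_sub]
      rw [h2, neg_pow, hT, mul_zero]
    set ℓp : K[X] := -∑ k ∈ Icc 1 m, ((k : K)⁻¹) • (X : K[X]) ^ k with hlp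
    have hNa : N = aeval S ℓp := by
      rw [hN, hlp]
      simp only [map_neg, map_sum, map_smul, map_pow, aeval_X]
    have hNm : N ^ m = 0 := by
      obtain ⟨q, hq⟩ := pow_dvd_pow_of_dvd (X_dvd_ell (K := K) m) m
      rw [hNa, ← map_pow, hq, map_mul, map_pow, aeval_X, hS, zero_mul]
    refine ⟨⟨m, hNm⟩, hNm, ?_⟩
    have hdvd : (X : K[X]) ^ m ∣
        (∑ k ∈ range m, ((Nat.factorial k : K)⁻¹) • ℓp ^ k) - (1 - X) :=
      X_pow_dvd_iff.mpr (fun d hd => key_congr m hm d hd)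
    obtain ⟨r, hr⟩ := hdvd
    have h2 := congrArg (aeval S) hr
    simp only [map_sub, map_sum, map_smul, map_pow, map_mul, map_one, aeval_X, hS,
      zero_mul, ← hNa] at h2
    rw [sub_eq_zero] at h2
    rw [h2, hSdef, sub_sub_cancel]
end

section
/- Let N be a nilpotent endomorphism of a finite-dimensional vector space L over a field. Then there exists an increasing filtration W(N) of L satisfying N(W_j) ⊆ W_{j-2} and N^j : Gr^W_j L ≅ Gr^W_{-j} L for all j ≥ 0 (the monodromy weight filtration centered at 0). -/
/-- An increasing filtration `W` (exhaustive and separated) is the monodromy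
weight filtration, centered at 0, of the nilpotent endomorphism `N` if
`N W_j ⊆ W_{j-2}` and for every `j ≥ 0` the map induced by `N^j` on graded
pieces `Gr^W_j L → Gr^W_{-j} L` is an isomorphism (expressed elementwise:
injectivity `grInj` and surjectivity `grSurj`). -/
structure IsMonodromyWeightFiltration {K L : Type*} [Field K] [AddCommGroup L]
    [Module K L] (N : Module.End K L) (W : ℤ → Submodule K L) : Prop where
  mono : Monotone W
  exhaustive : ∃ n : ℤ, W n = ⊤
  separated : ∃ n : ℤ, W n = ⊥
  shift : ∀ j : ℤ, ∀ x ∈ W j, N x ∈ W (j - 2)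
  grInj : ∀ j : ℕ, ∀ x ∈ W (j : ℤ), (N ^ j) x ∈ W (-(j : ℤ) - 1) → x ∈ W ((j : ℤ) - 1)
  grSurj : ∀ j : ℕ, ∀ y ∈ W (-(j : ℤ)), ∃ x ∈ W (j : ℤ),
      y - (N ^ j) x ∈ W (-(j : ℤ) - 1)


lemma wf_ker_le {K L : Type*} [Field K] [AddCommGroup L] [Module K L]
    {N : Module.End K L} {W : ℤ → Submodule K L}
    (h : IsMonodromyWeightFiltration N W) (j : ℕ) (x : L)
    (hx : (N ^ j) x = 0) : x ∈ W ((j : ℤ) - 1) := by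
  obtain ⟨n, hn⟩ := h.exhaustive
  have key : ∀ i : ℕ, x ∈ W ((j : ℤ) - 1 + i) → x ∈ W ((j : ℤ) - 1) := by
    intro i
    induction i with
    | zero => intro h0; simpa using h0
    | succ i ih =>
      intro hxi
      apply ih
      have h1 : x ∈ W ((j + i : ℕ) : ℤ) := by
        have he : ((j + i : ℕ) : ℤ) = (j : ℤ) - 1 + ((i : ℕ) + 1 : ℕ) := by push_cast; ring
        rw [he]; exact hxi
      have h2 : (N ^ (j + i)) x = 0 := by
        rw [add_comm, pow_add, Module.End.mul_apply, hx, map_zero]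
      have h3 := h.grInj (j + i) x h1 (by rw [h2]; exact zero_mem _)
      have he : ((j + i : ℕ) : ℤ) - 1 = (j : ℤ) - 1 + i := by push_cast; ring
      rwa [he] at h3
  refine key (n - ((j : ℤ) - 1)).toNat ?_
  have hxn : x ∈ W n := by rw [hn]; trivial
  exact h.mono (by omega) hxn

lemma wf_bot {K L : Type*} [Field K] [AddCommGroup L] [Module K L]
    {N : Module.End K L} {W : ℤ → Submodule K L}
    (h : IsMonodromyWeightFiltration N W) {m : ℕ} (hm : N ^ m = 0) :
    W (-(m : ℤ)) = ⊥ := by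
  obtain ⟨n, hn⟩ := h.separated
  have key : ∀ d : ℕ, ∀ i : ℕ, W (-(m : ℤ) - i - d) = ⊥ → W (-(m : ℤ) - i) = ⊥ := by
    intro d
    induction d with
    | zero => intro i hi; simpa using hi
    | succ d ih =>
      intro i hi
      have hprev : W (-(m : ℤ) - ((i : ℕ) + 1 : ℕ)) = ⊥ := by
        apply ih (i + 1)
        have he : -(m : ℤ) - ((i : ℕ) + 1 : ℕ) - d = -(m : ℤ) - i - ((d : ℕ) + 1 : ℕ) := by
          push_cast; ring
        rw [he]; exact hi
      rw [eq_bot_iff]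
      intro y hy
      have hy' : y ∈ W (-((m + i : ℕ) : ℤ)) := by
        have he : -((m + i : ℕ) : ℤ) = -(m : ℤ) - i := by push_cast; ring
        rw [he]; exact hy
      obtain ⟨x, _, hdiff⟩ := h.grSurj (m + i) y hy'
      have he : -((m + i : ℕ) : ℤ) - 1 = -(m : ℤ) - ((i : ℕ) + 1 : ℕ) := by push_cast; ring
      rw [he, hprev, Submodule.mem_bot, sub_eq_zero] at hdiff
      have hNx : (N ^ (m + i)) x = 0 := by
        rw [pow_add, Module.End.mul_apply, hm, LinearMap.zero_apply]
      rw [Submodule.mem_bot, hdiff, hNx]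
  have hstart : W (-(m : ℤ) - (0 : ℕ) - ((-(m : ℤ) - n).toNat : ℕ)) = ⊥ := by
    rw [eq_bot_iff, ← hn]
    exact h.mono (by omega)
  have := key ((-(m : ℤ) - n).toNat) 0 hstart
  simpa using this

theorem wf_aux : ∀ (k : ℕ) {K L : Type*} [Field K] [AddCommGroup L] [Module K L]
    (N : Module.End K L), N ^ (k + 1) = 0 →
    ∃ W : ℤ → Submodule K L, IsMonodromyWeightFiltration N W := by
  intro k
  induction k with
  | zero =>
    intro K L _ _ _ N hN
    rw [pow_one] at hN
    refine ⟨fun j => if 0 ≤ j then ⊤ else ⊥, ?_, ⟨0, if_pos le_rfl⟩, ⟨-1, if_neg (by omega)⟩,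
      ?_, ?_, ?_⟩
    · intro a b hab
      dsimp only
      by_cases hb : 0 ≤ b
      · rw [if_pos hb]; exact le_top
      · rw [if_neg hb, if_neg (by omega)]
    · intro j x _
      rw [hN, LinearMap.zero_apply]
      exact zero_mem _
    · intro j x hxj hres
      by_cases hj : j = 0
      · subst hj
        simp only [pow_zero, Module.End.one_apply] at hres
        simpa using hres
      · rw [if_pos (by omega)]; trivial
    · intro j y hy
      by_cases hj : j = 0
      · subst hj
        refine ⟨y, by simpa using hy, ?_⟩
        simp
      · rw [if_neg (by omega), Submodule.mem_bot] at hy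
        refine ⟨0, by rw [if_pos (by omega)]; trivial, ?_⟩
        rw [hy, map_zero, sub_zero]
        exact zero_mem _
  | succ k ih =>
    intro K L _ _ _ N hN
    -- hN : N ^ (k + 2) = 0
    set S : Submodule K L := LinearMap.ker (N ^ (k + 1)) with hSdef
    set T : Submodule K L := LinearMap.range (N ^ (k + 1)) with hTdef
    have hNS : ∀ x : L, N x ∈ S := by
      intro x
      show (N ^ (k + 1)) (N x) = 0
      rw [← Module.End.mul_apply, ← pow_succ, hN, LinearMap.zero_apply]
    have hpow_mem : ∀ (i : ℕ) (x : L), x ∈ S → (N ^ i) x ∈ S := by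
      intro i x hx
      show (N ^ (k + 1)) ((N ^ i) x) = 0
      rw [← Module.End.mul_apply, ← pow_add, show k + 1 + i = i + (k + 1) by omega, pow_add,
        Module.End.mul_apply, LinearMap.mem_ker.mp hx, map_zero]
    have hNT : ∀ x : L, x ∈ T → N x ∈ T := by
      rintro _ ⟨y, rfl⟩
      exact ⟨N y, by rw [← Module.End.mul_apply, ← pow_succ, pow_succ', Module.End.mul_apply]⟩
    set Nres : S →ₗ[K] S := N.restrict (fun x _ => hNS x) with hNres
    have hcoe : ∀ x : S, ((Nres x : L)) = N (x : L) := fun x => rfl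
    have hcoe_pow : ∀ (i : ℕ) (x : S), (((Nres ^ i) x : L)) = (N ^ i) (x : L) := by
      intro i
      induction i with
      | zero => intro x; simp
      | succ i ihp =>
        intro x
        rw [pow_succ, pow_succ, Module.End.mul_apply, Module.End.mul_apply, ihp, hcoe]
    set T' : Submodule K S := T.comap S.subtype with hT'def
    have hT'N : T' ≤ T'.comap Nres := by
      intro x hx
      show ((Nres x : L)) ∈ T
      rw [hcoe]
      exact hNT _ hx
    set N' : Module.End K (S ⧸ T') := Submodule.mapQ T' T' Nres hT'N with hN'def
    have hcommQ : ∀ (i : ℕ) (x : S), (N' ^ i) (T'.mkQ x) = T'.mkQ ((Nres ^ i) x) := by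
      intro i
      induction i with
      | zero => intro x; simp
      | succ i ihp =>
        intro x
        rw [pow_succ', pow_succ', Module.End.mul_apply, ihp, Module.End.mul_apply, hN'def]
        rw [Submodule.mkQ_apply, Submodule.mkQ_apply, Submodule.mapQ_apply]
    have hN'pow : N' ^ (k + 1) = 0 := by
      apply LinearMap.ext
      intro u
      obtain ⟨x, rfl⟩ := Submodule.mkQ_surjective T' u
      rw [hcommQ]
      have hx0 : (Nres ^ (k + 1)) x = 0 := Subtype.ext (by
        rw [hcoe_pow]
        exact LinearMap.mem_ker.mp x.2)
      rw [hx0, map_zero, LinearMap.zero_apply]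
    obtain ⟨W', hW'⟩ := ih N' hN'pow
    have hW'top : ∀ j : ℤ, (k : ℤ) ≤ j → W' j = ⊤ := by
      intro j hj
      rw [eq_top_iff]
      intro u _
      have hu : u ∈ W' (((k + 1 : ℕ) : ℤ) - 1) :=
        wf_ker_le hW' (k + 1) u (by rw [hN'pow, LinearMap.zero_apply])
      exact hW'.mono (by push_cast; omega) hu
    have hW'bot : ∀ j : ℤ, j ≤ -((k : ℤ) + 1) → W' j = ⊥ := by
      intro j hj
      rw [eq_bot_iff]
      have h0 : W' (-((k + 1 : ℕ) : ℤ)) = ⊥ := wf_bot hW' hN'pow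
      exact le_of_le_of_eq (hW'.mono (by push_cast; omega)) h0
    set pre : Submodule K (S ⧸ T') → Submodule K L :=
      fun U => (U.comap T'.mkQ).map S.subtype with hpre
    have mem_pre : ∀ (U : Submodule K (S ⧸ T')) (x : L),
        x ∈ pre U ↔ ∃ hx : x ∈ S, T'.mkQ ⟨x, hx⟩ ∈ U := by
      intro U x
      simp only [hpre, Submodule.mem_map, Submodule.mem_comap, Submodule.coe_subtype]
      constructor
      · rintro ⟨⟨y, hy⟩, hyU, rfl⟩
        exact ⟨hy, hyU⟩
      · rintro ⟨hx, hU⟩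
        exact ⟨⟨x, hx⟩, hU, rfl⟩
    set W : ℤ → Submodule K L := fun j =>
      if (k : ℤ) + 1 ≤ j then ⊤ else if j ≤ -((k : ℤ) + 1) - 1 then ⊥ else pre (W' j) with hW
    have hWtop : ∀ j : ℤ, (k : ℤ) + 1 ≤ j → W j = ⊤ := by
      intro j hj; simp only [hW]; rw [if_pos hj]
    have hWbot : ∀ j : ℤ, j ≤ -((k : ℤ) + 1) - 1 → W j = ⊥ := by
      intro j hj; simp only [hW]; rw [if_neg (by omega), if_pos hj]
    have hWmid : ∀ j : ℤ, -((k : ℤ) + 1) ≤ j → j ≤ (k : ℤ) → W j = pre (W' j) := by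
      intro j h1 h2; simp only [hW]; rw [if_neg (by omega), if_neg (by omega)]
    refine ⟨W, ?_, ⟨(k : ℤ) + 1, hWtop _ le_rfl⟩, ⟨-((k : ℤ) + 1) - 1, hWbot _ le_rfl⟩,
      ?_, ?_, ?_⟩
    · -- mono
      intro a b hab
      rcases le_or_gt ((k : ℤ) + 1) b with hb | hb
      · rw [hWtop b hb]; exact le_top
      rcases le_or_gt a (-((k : ℤ) + 1) - 1) with ha | ha
      · rw [hWbot a ha]; exact bot_le
      rw [hWmid a (by omega) (by omega), hWmid b (by omega) (by omega)]
      exact Submodule.map_mono (Submodule.comap_mono (hW'.mono hab))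
    · -- shift
      intro j x hx
      rcases le_or_gt ((k : ℤ) + 1) (j - 2) with h1 | h1
      · rw [hWtop _ h1]; trivial
      rcases le_or_gt ((k : ℤ) + 1) j with h2 | h2
      · -- j = k+2 or j = k+1 (as integers)
        rcases (by omega : j = (k : ℤ) + 2 ∨ j = (k : ℤ) + 1) with hj | hj
        · rw [hj, show (k : ℤ) + 2 - 2 = (k : ℤ) by ring, hWmid _ (by omega) (by omega), mem_pre]
          exact ⟨hNS x, by rw [hW'top _ le_rfl]; trivial⟩
        · rw [hj, show (k : ℤ) + 1 - 2 = (k : ℤ) - 1 by ring,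
            hWmid _ (by omega) (by omega), mem_pre]
          refine ⟨hNS x, ?_⟩
          have hker : (N' ^ k) (T'.mkQ ⟨N x, hNS x⟩) = 0 := by
            rw [hcommQ, Submodule.mkQ_apply, Submodule.Quotient.mk_eq_zero]
            show (((Nres ^ k) ⟨N x, hNS x⟩ : S) : L) ∈ T
            rw [hcoe_pow]
            exact ⟨x, by rw [← Module.End.mul_apply, ← pow_succ]⟩
          have := wf_ker_le hW' k _ hker
          exact hW'.mono (by omega) this
      -- j ≤ k
      rcases le_or_gt j (-((k : ℤ) + 1) - 1) with h3 | h3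
      · rw [hWbot _ h3, Submodule.mem_bot] at hx
        rw [hx, map_zero]
        exact zero_mem _
      -- middle j
      rw [hWmid j (by omega) (by omega), mem_pre] at hx
      obtain ⟨hxS, hxW'⟩ := hx
      have heqN' : N' (T'.mkQ ⟨x, hxS⟩) = T'.mkQ ⟨N x, hNS x⟩ := by
        rw [hN'def, Submodule.mkQ_apply, Submodule.mkQ_apply, Submodule.mapQ_apply]
        rfl
      rcases le_or_gt (-((k : ℤ) + 1) + 2) j with h4 | h4
      · rw [hWmid (j - 2) (by omega) (by omega), mem_pre]
        refine ⟨hNS x, ?_⟩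
        have hsh := hW'.shift j _ hxW'
        rwa [heqN'] at hsh
      · have hx0 : N x = 0 := by
          rcases (by omega : j = -((k : ℤ) + 1) ∨ j = -((k : ℤ) + 1) + 1) with hj | hj
          · rw [hW'bot j (by omega)] at hxW'
            have hxT : (⟨x, hxS⟩ : S) ∈ T' := by
              rwa [Submodule.mem_bot, Submodule.mkQ_apply, Submodule.Quotient.mk_eq_zero]
                at hxW'
            obtain ⟨y, hy⟩ := hxT
            have hy' : (N ^ (k + 1)) y = x := hy
            rw [← hy', ← Module.End.mul_apply, ← pow_succ', hN, LinearMap.zero_apply]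
          · -- j = -k : use grSurj of W' at k
            have hxW'' : T'.mkQ ⟨x, hxS⟩ ∈ W' (-(k : ℤ)) := by
              have he : -(k : ℤ) = j := by omega
              rw [he]; exact hxW'
            obtain ⟨xb, _, hdiff⟩ := hW'.grSurj k (T'.mkQ ⟨x, hxS⟩) hxW''
            rw [hW'bot _ (by push_cast; omega), Submodule.mem_bot, sub_eq_zero] at hdiff
            obtain ⟨z, rfl⟩ := Submodule.mkQ_surjective T' xb
            rw [hcommQ] at hdiff
            have hmemT' : (⟨x, hxS⟩ - (Nres ^ k) z) ∈ T' := by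
              rw [← Submodule.Quotient.mk_eq_zero T', ← Submodule.mkQ_apply, map_sub,
                sub_eq_zero]
              exact hdiff
            obtain ⟨y, hy⟩ := hmemT'
            -- hy : (N^(k+1)) y = x - N^k z
            have hyL : (N ^ (k + 1)) y = x - (N ^ k) (z : L) := by
              rw [hy]
              show (((⟨x, hxS⟩ - (Nres ^ k) z : S) : L)) = _
              rw [Submodule.coe_sub, hcoe_pow]
            have hxeq : x = (N ^ k) (z : L) + (N ^ (k + 1)) y := by
              rw [hyL]; abel
            rw [hxeq, map_add]
            have hz1 : N ((N ^ k) (z : L)) = 0 := by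
              rw [← Module.End.mul_apply, ← pow_succ']
              exact LinearMap.mem_ker.mp z.2
            have hz2 : N ((N ^ (k + 1)) y) = 0 := by
              rw [← Module.End.mul_apply, ← pow_succ', hN, LinearMap.zero_apply]
            rw [hz1, hz2, add_zero]
        rw [hx0]
        exact zero_mem _
    · -- grInj
      intro j x hxj hres2
      rcases lt_or_ge ((k : ℤ) + 1) (j : ℤ) with hj | hj
      · rw [hWtop _ (by omega)]; trivial
      rcases eq_or_lt_of_le hj with hj1 | hj1
      · -- j = k + 1
        have hjnat : j = k + 1 := by omega
        subst hjnat
        rw [hWbot _ (by push_cast; omega), Submodule.mem_bot] at hres2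
        have hxS : x ∈ S := LinearMap.mem_ker.mpr hres2
        rw [show ((k + 1 : ℕ) : ℤ) - 1 = (k : ℤ) by push_cast; ring,
          hWmid _ (by omega) (by omega), mem_pre]
        exact ⟨hxS, by rw [hW'top _ le_rfl]; trivial⟩
      · -- j ≤ k
        rw [hWmid _ (by omega) (by omega), mem_pre] at hxj
        obtain ⟨hxS, hxW'⟩ := hxj
        rw [hWmid _ (by omega) (by omega), mem_pre] at hres2
        obtain ⟨hNjS, hNW'⟩ := hres2
        have hNq : (N' ^ j) (T'.mkQ ⟨x, hxS⟩) ∈ W' (-(j : ℤ) - 1) := by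
          rw [hcommQ]
          have he : (Nres ^ j) ⟨x, hxS⟩ = ⟨(N ^ j) x, hNjS⟩ := Subtype.ext (hcoe_pow j _)
          rw [he]
          exact hNW'
        have happ := hW'.grInj j _ hxW' hNq
        rw [hWmid _ (by omega) (by omega), mem_pre]
        exact ⟨hxS, happ⟩
    · -- grSurj
      intro j y hy
      rcases lt_or_ge ((k : ℤ) + 1) (j : ℤ) with hj | hj
      · -- j ≥ k + 2
        rw [hWbot _ (by omega), Submodule.mem_bot] at hy
        refine ⟨0, by rw [hWtop _ (by omega)]; trivial, ?_⟩
        rw [hy, map_zero, sub_zero]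
        exact zero_mem _
      rcases eq_or_lt_of_le hj with hj1 | hj1
      · -- j = k + 1
        have hjnat : j = k + 1 := by omega
        subst hjnat
        rw [hWmid _ (by push_cast; omega) (by push_cast; omega), mem_pre] at hy
        obtain ⟨hyS, hyW'⟩ := hy
        rw [hW'bot _ (by push_cast; omega), Submodule.mem_bot, Submodule.mkQ_apply,
          Submodule.Quotient.mk_eq_zero] at hyW'
        obtain ⟨z, hz⟩ := hyW'
        have hz' : (N ^ (k + 1)) z = y := hz
        refine ⟨z, by rw [hWtop _ (by omega)]; trivial, ?_⟩
        rw [hz', sub_self]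
        exact zero_mem _
      · -- j ≤ k
        rw [hWmid _ (by omega) (by omega), mem_pre] at hy
        obtain ⟨hyS, hyW'⟩ := hy
        obtain ⟨xb, hxbW, hdiff⟩ := hW'.grSurj j (T'.mkQ ⟨y, hyS⟩) hyW'
        obtain ⟨z, rfl⟩ := Submodule.mkQ_surjective T' xb
        refine ⟨(z : L), ?_, ?_⟩
        · rw [hWmid _ (by omega) (by omega), mem_pre]
          exact ⟨z.2, hxbW⟩
        · rw [hWmid _ (by omega) (by omega), mem_pre]
          have hmemS : y - (N ^ j) (z : L) ∈ S := sub_mem hyS (hpow_mem j _ z.2)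
          refine ⟨hmemS, ?_⟩
          have he : T'.mkQ ⟨y - (N ^ j) (z : L), hmemS⟩
              = T'.mkQ ⟨y, hyS⟩ - (N' ^ j) (T'.mkQ z) := by
            rw [hcommQ, ← map_sub]
            congr 1
            exact Subtype.ext (by rw [Submodule.coe_sub, hcoe_pow])
          rw [he]
          exact hdiff

/-- existence of the monodromy weight filtration of a nilpotent
endomorphism of a finite-dimensional vector space. -/
theorem monodromy_weight_filtration_exists {K L : Type*} [Field K]
    [AddCommGroup L] [Module K L] [FiniteDimensional K L]
    (N : Module.End K L) (hN : IsNilpotent N) :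
    ∃ W : ℤ → Submodule K L, IsMonodromyWeightFiltration N W := by
  obtain ⟨n, hn⟩ := hN
  exact wf_aux n N (by rw [pow_succ, hn, zero_mul])
end

section
/- Let N be nilpotent on a finite-dimensional vector space L over a field of characteristic zero, with monodromy weight filtration W = W(N). Then for every k, the natural map (ker N ∩ W_k)/(ker N ∩ W_{k-1}) → ker(N : Gr^W_k L → Gr^W_{k-2} L) is an isomorphism. -/
section Aux
variable {K L : Type*} [Field K] [AddCommGroup L] [Module K L]
  {N : Module.End K L} {W : ℤ → Submodule K L}

/-- Iterated shift: `N^a` maps `W j` into `W (j - 2a)`. -/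
lemma IsMonodromyWeightFiltration.pow_shift (hW : IsMonodromyWeightFiltration N W)
    (a : ℕ) {j : ℤ} {x : L} (hx : x ∈ W j) : (N ^ a) x ∈ W (j - 2 * a) := by
  induction a with
  | zero => simpa using hx
  | succ n ih =>
      have h := hW.shift (j - 2 * n) _ ih
      have : (N ^ (n + 1)) x = N ((N ^ n) x) := by
        rw [pow_succ']; rfl
      rw [this]
      have : j - 2 * n - 2 = j - 2 * (n + 1 : ℕ) := by push_cast; ring
      rwa [this] at h

/-- Graded surjectivity of `N^a : Gr_{t+2a} → Gr_t` for `t + a ≤ 0`. -/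
lemma IsMonodromyWeightFiltration.grSurj_pow (hW : IsMonodromyWeightFiltration N W)
    (a : ℕ) {t : ℤ} (ht : t + a ≤ 0) {u : L} (hu : u ∈ W t) :
    ∃ w ∈ W (t + 2 * a), u - (N ^ a) w ∈ W (t - 1) := by
  set j : ℕ := (-t).toNat with hj
  have hjz : (j : ℤ) = -t := Int.toNat_of_nonneg (by omega)
  have hu' : u ∈ W (-(j : ℤ)) := by rw [hjz, neg_neg]; exact hu
  obtain ⟨v, hv, hvu⟩ := hW.grSurj j u hu'
  have haj : a ≤ j := by omega
  refine ⟨(N ^ (j - a)) v, ?_, ?_⟩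
  · have := hW.pow_shift (j - a) hv
    have e : (j : ℤ) - 2 * ((j : ℤ) - a) = t + 2 * a := by omega
    have e2 : ((j - a : ℕ) : ℤ) = (j : ℤ) - a := by
      push_cast [haj]; ring
    rwa [e2, e] at this
  · have : (N ^ a) ((N ^ (j - a)) v) = (N ^ j) v := by
      rw [show (N ^ a) ((N ^ (j - a)) v) = (N ^ a * N ^ (j - a)) v from rfl,
        ← pow_add, Nat.add_sub_cancel' haj]
    rw [this]
    have e : -(j : ℤ) - 1 = t - 1 := by omega
    rwa [e] at hvu

/-- Exact surjectivity: for `t + a ≤ 0`, every `u ∈ W t` is exactly `N^a w`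
with `w ∈ W (t + 2a)`. Proved by downward induction using separatedness. -/
lemma IsMonodromyWeightFiltration.strict_surj (hW : IsMonodromyWeightFiltration N W)
    {n₀ : ℤ} (hn₀ : W n₀ = ⊥) (a : ℕ) :
    ∀ d : ℕ, ∀ t : ℤ, t + a ≤ 0 → t ≤ n₀ + d → ∀ u ∈ W t,
      ∃ w ∈ W (t + 2 * a), (N ^ a) w = u := by
  intro d
  induction d with
  | zero =>
      intro t _ htd u hu
      have : u ∈ W n₀ := hW.mono (by omega) hu
      rw [hn₀] at this
      simp only [Submodule.mem_bot] at this
      exact ⟨0, (W _).zero_mem, by simp [this]⟩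
  | succ n ih =>
      intro t hta htd u hu
      obtain ⟨w₁, hw₁, hw₁u⟩ := hW.grSurj_pow a hta hu
      rcases le_or_gt t (n₀ + n) with h | h
      · exact ih t hta h u hu
      obtain ⟨w₂, hw₂, hw₂u⟩ := ih (t - 1) (by omega) (by omega) _ hw₁u
      refine ⟨w₁ + w₂, (W _).add_mem hw₁ (hW.mono (by omega) hw₂), ?_⟩
      rw [map_add, hw₂u]
      abel

end Aux
/-- the natural map
`(ker N ∩ W_k)/(ker N ∩ W_{k-1}) → ker (N : Gr^W_k L → Gr^W_{k-2} L)` is an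
isomorphism.  Elementwise: it is injective (an element of `ker N ∩ W_k` lying
in `W_{k-1}` lies in `ker N ∩ W_{k-1}`) and surjective (any `x ∈ W_k` with
`N x ∈ W_{k-3}`, i.e. representing a class in the kernel of the induced map,
agrees modulo `W_{k-1}` with an element of `ker N ∩ W_k`). -/
theorem monodromy_ker_gr_iso {K L : Type*} [Field K] [CharZero K]
    [AddCommGroup L] [Module K L] [FiniteDimensional K L]
    (N : Module.End K L) (hN : IsNilpotent N)
    (W : ℤ → Submodule K L) (hW : IsMonodromyWeightFiltration N W) (k : ℤ) :
    (∀ x ∈ LinearMap.ker N ⊓ W k, x ∈ W (k - 1) →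
      x ∈ LinearMap.ker N ⊓ W (k - 1)) ∧
    (∀ x ∈ W k, N x ∈ W (k - 3) →
      ∃ y ∈ LinearMap.ker N ⊓ W k, x - y ∈ W (k - 1)) := by
  constructor
  · intro x hx hx'
    exact ⟨hx.1, hx'⟩
  · intro x hx hNx
    rcases le_or_gt k 0 with hk | hk
    · -- k ≤ 0
      obtain ⟨n₀, hn₀⟩ := hW.separated
      set m : ℕ := (-k).toNat with hm
      have hmk : (m : ℤ) = -k := Int.toNat_of_nonneg (by omega)
      have hx' : x ∈ W (-(m : ℤ)) := by rw [hmk, neg_neg]; exact hx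
      obtain ⟨z, hz, hxz⟩ := hW.grSurj m x hx'
      -- N^{m+1} z ∈ W (-(m:ℤ) - 3)
      have hNz : (N ^ (m + 1)) z ∈ W (-(m : ℤ) - 3) := by
        have e : (N ^ (m + 1)) z = N x - N (x - (N ^ m) z) := by
          rw [map_sub, pow_succ']
          simp [Module.End.mul_apply]
        rw [e]
        have h1 : N x ∈ W (-(m : ℤ) - 3) := by
          have := hNx
          have ek : k - 3 = -(m : ℤ) - 3 := by omega
          rwa [ek] at this
        have h2 : N (x - (N ^ m) z) ∈ W (-(m : ℤ) - 3) := by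
          have := hW.shift _ _ hxz
          have e2 : -(m : ℤ) - 1 - 2 = -(m : ℤ) - 3 := by ring
          rwa [e2] at this
        exact (W _).sub_mem h1 h2
      -- exact surjectivity: N^{m+1} z = N^{m+1} w with w ∈ W (m - 1)
      have hta : (-(m : ℤ) - 3) + (m + 1 : ℕ) ≤ 0 := by push_cast; omega
      obtain ⟨w, hw, hwz⟩ := hW.strict_surj hn₀ (m + 1)
        ((-(m : ℤ) - 3) - n₀).toNat (-(m : ℤ) - 3) hta (by omega) _ hNz
      have hw' : w ∈ W ((m : ℤ) - 1) := by
        have e : (-(m : ℤ) - 3) + 2 * ((m : ℕ) + 1 : ℕ) = (m : ℤ) - 1 := by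
          push_cast; ring
        rwa [e] at hw
      refine ⟨(N ^ m) (z - w), ⟨?_, ?_⟩, ?_⟩
      · -- in ker N
        show N ((N ^ m) (z - w)) = 0
        have : N ((N ^ m) (z - w)) = (N ^ (m + 1)) (z - w) := by
          rw [pow_succ']; rfl
        rw [this, map_sub, hwz, sub_self]
      · -- in W k
        have hzw : z - w ∈ W (m : ℤ) := (W _).sub_mem hz (hW.mono (by omega) hw')
        have := hW.pow_shift m hzw
        have e : (m : ℤ) - 2 * m = k := by omega
        rwa [e] at this
      · -- x - y ∈ W (k - 1)
        have e : x - (N ^ m) (z - w) = (x - (N ^ m) z) + (N ^ m) w := by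
          rw [map_sub]; abel
        rw [e]
        have h1 : x - (N ^ m) z ∈ W (k - 1) := by
          have e1 : -(m : ℤ) - 1 = k - 1 := by omega
          rwa [e1] at hxz
        have h2 : (N ^ m) w ∈ W (k - 1) := by
          have := hW.pow_shift m hw'
          exact hW.mono (by omega) this
        exact (W _).add_mem h1 h2
    · -- k ≥ 1 : then x itself lies in W (k-1), take y = 0
      refine ⟨0, ⟨LinearMap.mem_ker.mpr (map_zero N), (W k).zero_mem⟩, ?_⟩
      rw [sub_zero]
      set j : ℕ := k.toNat with hj
      have hjk : (j : ℤ) = k := Int.toNat_of_nonneg (by omega)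
      have hj1 : 1 ≤ j := by omega
      have hx' : x ∈ W (j : ℤ) := by rwa [hjk]
      have hNjx : (N ^ j) x ∈ W (-(j : ℤ) - 1) := by
        have e : (N ^ j) x = (N ^ (j - 1)) (N x) := by
          conv_lhs => rw [show j = (j - 1) + 1 by omega]
          rw [pow_succ]; rfl
        rw [e]
        have := hW.pow_shift (j - 1) hNx
        have e2 : k - 3 - 2 * ((j - 1 : ℕ) : ℤ) = -(j : ℤ) - 1 := by
          have : ((j - 1 : ℕ) : ℤ) = (j : ℤ) - 1 := by omega
          omega
        rwa [e2] at this
      have := hW.grInj j x hx' hNjx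
      rwa [hjk] at this
end

section
/- Let N be nilpotent on a finite-dimensional vector space L with monodromy weight filtration W = W(N). For an integer r > 0, consider the two-term complex Gr^W_{r+1} L → Gr^W_{r-1} L (in degrees 0 and 1) with differential induced by N. Its degree-0 cohomology vanishes and its degree-1 cohomology is isomorphic to Gr^{W'}_{r-1}(L/NL), where W' is the filtration induced by W on L/NL. For r = 0 the complex Gr^W_1 L → Gr^W_{-1} L is exact (both cohomologies vanish). For r < 0, the degree-1 cohomology vanishes and the degree-0 cohomology of Gr^W_{r+1} L → Gr^W_{r-1} L is isomorphic to Gr^{W''}_{r+1}(ker N), where W'' is the filtration induced by W on ker N. -/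
/-- cohomology of the two-term complex
`Gr^W_{r+1} L → Gr^W_{r-1} L` (differential induced by `N`, degrees 0 and 1)
for the monodromy weight filtration `W = W(N)`.
For `r > 0`: `H^0 = 0` (elementwise injectivity of the induced map) and
`H^1 ≅ Gr^{W'}_{r-1}(L/NL)` (elementwise: the natural surjection from the
cokernel of the induced map to the graded piece of the image filtration on
`L/NL` is injective, i.e. `W_{r-1} ∩ Im N ⊆ W_{r-2} + N(W_{r+1})`).
For `r = 0`: the complex is exact (injective and surjective induced map).
For `r < 0`: `H^1 = 0` (surjectivity) and `H^0 ≅ Gr^{W''}_{r+1}(ker N)`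
(elementwise: any class in the kernel of the induced map is represented by an
element of `ker N ∩ W_{r+1}`). -/
theorem monodromy_two_term_cohomology {K L : Type*} [Field K] [CharZero K]
    [AddCommGroup L] [Module K L] [FiniteDimensional K L]
    (N : Module.End K L) (hN : IsNilpotent N)
    (W : ℤ → Submodule K L) (hW : IsMonodromyWeightFiltration N W) (r : ℤ) :
    (0 < r →
      (∀ x ∈ W (r + 1), N x ∈ W (r - 2) → x ∈ W r) ∧
      (W (r - 1) ⊓ LinearMap.range (N : L →ₗ[K] L) ≤
        W (r - 2) ⊔ Submodule.map (N : L →ₗ[K] L) (W (r + 1)))) ∧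
    (r = 0 →
      (∀ x ∈ W (r + 1), N x ∈ W (r - 2) → x ∈ W r) ∧
      (∀ y ∈ W (r - 1), ∃ x ∈ W (r + 1), y - N x ∈ W (r - 2))) ∧
    (r < 0 →
      (∀ y ∈ W (r - 1), ∃ x ∈ W (r + 1), y - N x ∈ W (r - 2)) ∧
      (∀ x ∈ W (r + 1), N x ∈ W (r - 2) →
        ∃ y ∈ LinearMap.ker N ⊓ W (r + 1), x - y ∈ W r)) := by
  classical
  have powShift : ∀ (k : ℕ) (m : ℤ), ∀ x ∈ W m, (N ^ k) x ∈ W (m - 2 * k) := by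
    intro k
    induction k with
    | zero => intro m x hx; simpa using hx
    | succ k ih =>
      intro m x hx
      have h1 := hW.shift _ _ (ih m x hx)
      have h3 : (N ^ (k+1)) x = N ((N ^ k) x) := by
        rw [pow_succ']; rfl
      rw [h3]
      have e : m - 2 * (k:ℤ) - 2 = m - 2 * ((k:ℕ)+1 : ℕ) := by push_cast; ring
      exact e ▸ h1
  obtain ⟨nB, hB⟩ := hW.separated
  obtain ⟨nT, hT⟩ := hW.exhaustive
  have hBle : ∀ m : ℤ, m ≤ nB → W m = ⊥ := fun m hm =>
    le_bot_iff.mp (hB ▸ hW.mono hm)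
  refine ⟨?_, ?_, ?_⟩
  · -- r > 0
    intro hr
    constructor
    · intro x hx hNx
      set j : ℕ := (r + 1).toNat with hj
      have hjz : (j : ℤ) = r + 1 := Int.toNat_of_nonneg (by omega)
      have key : (N ^ j) x ∈ W (-(j:ℤ) - 1) := by
        have h3 : (N ^ j) x = (N ^ (j-1)) (N x) := by
          conv_lhs => rw [show j = (j-1)+1 by omega, pow_succ]
          rfl
        rw [h3]
        have h2 := powShift (j-1) (r-2) (N x) hNx
        have e : r - 2 - 2 * ((j-1:ℕ):ℤ) = -(j:ℤ) - 1 := by omega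
        exact e ▸ h2
      have hx' := hW.grInj j x (by rw [hjz]; exact hx) key
      have e : (j:ℤ) - 1 = r := by omega
      exact e ▸ hx'
    · intro y hy
      obtain ⟨hy1, z0, hz0⟩ := hy
      have descend : ∀ t : ℕ, ∀ k : ℤ, k - (r+1) ≤ t → ∀ z : L, z ∈ W k →
          N z ∈ W (r-1) → N z ∈ Submodule.map (N : L →ₗ[K] L) (W (r + 1)) := by
        intro t
        induction t with
        | zero =>
          intro k hk z hz hNz
          exact ⟨z, hW.mono (by omega) hz, rfl⟩
        | succ t ih =>
          intro k hk z hz hNz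
          by_cases hk' : k ≤ r + 1
          · exact ⟨z, hW.mono hk' hz, rfl⟩
          · push_neg at hk'
            set j : ℕ := k.toNat with hj
            have hjz : (j : ℤ) = k := Int.toNat_of_nonneg (by omega)
            have key : (N ^ j) z ∈ W (-(j:ℤ) - 1) := by
              have h1 : N z ∈ W (k - 3) := hW.mono (by omega) hNz
              have h2 := powShift (j-1) (k-3) (N z) h1
              have h3 : (N ^ j) z = (N ^ (j-1)) (N z) := by
                conv_lhs => rw [show j = (j-1)+1 by omega, pow_succ]
                rfl
              rw [h3]
              have e : k - 3 - 2 * ((j-1:ℕ):ℤ) = -(j:ℤ) - 1 := by omega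
              exact e ▸ h2
            have hz' := hW.grInj j z (by rw [hjz]; exact hz) key
            rw [hjz] at hz'
            exact ih (k-1) (by omega) z hz' hNz
      have hz0T : z0 ∈ W (max nT (r+1)) := by
        have : z0 ∈ W nT := by rw [hT]; trivial
        exact hW.mono (le_max_left _ _) this
      have := descend (max nT (r+1) - (r+1)).toNat (max nT (r+1)) (by omega) z0 hz0T
        (by rw [hz0]; exact hy1)
      rw [hz0] at this
      exact Submodule.mem_sup_right this
  · -- r = 0
    intro hr
    subst hr
    constructor
    · intro x hx hNx
      have hx1 : x ∈ W ((1:ℕ) : ℤ) := by norm_num; exact hx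
      have key : (N ^ (1:ℕ)) x ∈ W (-((1:ℕ):ℤ) - 1) := by
        rw [pow_one]; norm_num; exact hNx
      have := hW.grInj 1 x hx1 key
      norm_num at this
      exact this
    · intro y hy
      have hy1 : y ∈ W (-((1:ℕ):ℤ)) := by norm_num; exact hy
      obtain ⟨x, hx, hx2⟩ := hW.grSurj 1 y hy1
      rw [pow_one] at hx2
      norm_num at hx hx2
      exact ⟨x, hx, hx2⟩
  · -- r < 0
    intro hr
    constructor
    · intro y hy
      set j : ℕ := (1 - r).toNat with hj
      have hjz : (j : ℤ) = 1 - r := Int.toNat_of_nonneg (by omega)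
      have hy' : y ∈ W (-(j:ℤ)) := by
        have e : r - 1 = -(j:ℤ) := by omega
        exact e ▸ hy
      obtain ⟨u, hu, hu2⟩ := hW.grSurj j y hy'
      refine ⟨(N ^ (j-1)) u, ?_, ?_⟩
      · have h2 := powShift (j-1) ((j:ℤ)) u hu
        have e : (j:ℤ) - 2 * ((j-1:ℕ):ℤ) = r + 1 := by omega
        exact e ▸ h2
      · have h3 : (N ^ j) u = N ((N ^ (j-1)) u) := by
          conv_lhs => rw [show j = (j-1)+1 by omega, pow_succ']
          rfl
        rw [← h3]
        have e : -(j:ℤ) - 1 = r - 2 := by omega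
        exact e ▸ hu2
    · intro x hx hNx
      have killer : ∀ t : ℕ, ∀ s : ℤ, s ≤ r - 2 → s - nB ≤ t → ∀ v ∈ W s,
          ∃ z ∈ W (s+2), N z = v := by
        intro t
        induction t with
        | zero =>
          intro s hs hst v hv
          have hWs : W s = ⊥ := hBle s (by omega)
          rw [hWs, Submodule.mem_bot] at hv
          exact ⟨0, Submodule.zero_mem _, by simp [hv]⟩
        | succ t ih =>
          intro s hs hst v hv
          by_cases hsB : s ≤ nB
          · have hWs : W s = ⊥ := hBle s hsB
            rw [hWs, Submodule.mem_bot] at hv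
            exact ⟨0, Submodule.zero_mem _, by simp [hv]⟩
          · push_neg at hsB
            set j : ℕ := (-s).toNat with hj
            have hjz : (j : ℤ) = -s := Int.toNat_of_nonneg (by omega)
            have hv' : v ∈ W (-(j:ℤ)) := by
              have e : s = -(j:ℤ) := by omega
              exact e ▸ hv
            obtain ⟨u, hu, hu2⟩ := hW.grSurj j v hv'
            have hw : (N ^ (j-1)) u ∈ W (s + 2) := by
              have h2 := powShift (j-1) ((j:ℤ)) u hu
              have e : (j:ℤ) - 2 * ((j-1:ℕ):ℤ) = s + 2 := by omega
              exact e ▸ h2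
            have hNw : (N ^ j) u = N ((N ^ (j-1)) u) := by
              conv_lhs => rw [show j = (j-1)+1 by omega, pow_succ']
              rfl
            have hv2 : v - N ((N ^ (j-1)) u) ∈ W (s - 1) := by
              rw [← hNw]
              have e : -(j:ℤ) - 1 = s - 1 := by omega
              exact e ▸ hu2
            obtain ⟨z', hz', hz'2⟩ := ih (s-1) (by omega) (by omega) _ hv2
            have hz'' : z' ∈ W (s + 2) := hW.mono (show s - 1 + 2 ≤ s + 2 by omega) hz'
            refine ⟨(N ^ (j-1)) u + z', Submodule.add_mem _ hw hz'', ?_⟩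
            rw [map_add, hz'2]
            abel
      obtain ⟨z, hz, hz2⟩ := killer (r - 2 - nB).toNat (r-2) le_rfl (by omega) (N x) hNx
      have hzr : z ∈ W r := by simpa using hz
      refine ⟨x - z, ⟨?_, ?_⟩, ?_⟩
      · exact LinearMap.mem_ker.mpr (by rw [map_sub, hz2, sub_self])
      · exact Submodule.sub_mem _ hx (hW.mono (by omega) hzr)
      · simpa using hzr
end

section
/- (Kashiwara splitting, weak form) Let L be a finite-dimensional vector space with an increasing filtration W and a nilpotent endomorphism N preserving W. Suppose the relative weight filtration M = M(N, W) exists, i.e., M is an increasing filtration with N(M_j) ⊆ M_{j-2} and for all k and j ≥ 0, N^j induces isomorphisms Gr^M_{k+j} Gr^W_k L ≅ Gr^M_{k-j} Gr^W_k L. Then for every pair (k, l), dim Gr^M_l L = ∑_k dim Gr^M_l Gr^W_k L, equivalently the exact sequences 0 → (W_{k-1}-part of Gr^M_l L) → (W_k-part of Gr^M_l L) → Gr^W_k Gr^M_l L → 0 split compatibly so that Gr^M_l L ≅ ⊕_k Gr^W_k Gr^M_l L. -/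
/-- The subquotient `P / (Q ∩ P)` of a module, for submodules `P Q`. -/
abbrev grQ {K M : Type*} [Field K] [AddCommGroup M] [Module K M]
    (P Q : Submodule K M) : Type _ :=
  ↥P ⧸ ((Q ⊓ P).comap P.subtype)

/-- Dimension of the subquotient `P / (Q ∩ P)`. -/
noncomputable def grDim {K M : Type*} [Field K] [AddCommGroup M] [Module K M]
    (P Q : Submodule K M) : ℕ :=
  Module.finrank K (grQ P Q)

/-- `M` is the relative weight filtration `M(N, W)` of the nilpotent
endomorphism `N` with respect to the increasing filtration `W`:
`N` preserves `W`, shifts `M` by `-2`, and for all `k ∈ ℤ`, `j ≥ 0`, `N^j`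
induces an isomorphism `Gr^M_{k+j} Gr^W_k L ≅ Gr^M_{k-j} Gr^W_k L`
(expressed elementwise on the Zassenhaus presentations of the double graded
pieces). -/
structure IsRelativeWeightFiltration {K L : Type*} [Field K] [AddCommGroup L]
    [Module K L] (N : Module.End K L) (W M : ℤ → Submodule K L) : Prop where
  monoW : Monotone W
  monoM : Monotone M
  exhaustiveM : ∃ n : ℤ, M n = ⊤
  separatedM : ∃ n : ℤ, M n = ⊥
  presW : ∀ j : ℤ, ∀ x ∈ W j, N x ∈ W j
  shiftM : ∀ j : ℤ, ∀ x ∈ M j, N x ∈ M (j - 2)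
  grInj : ∀ (k : ℤ) (j : ℕ), ∀ x ∈ W k ⊓ M (k + (j : ℤ)),
      (N ^ j) x ∈ (W (k - 1) ⊓ M (k - (j : ℤ))) ⊔ (W k ⊓ M (k - (j : ℤ) - 1)) →
      x ∈ (W (k - 1) ⊓ M (k + (j : ℤ))) ⊔ (W k ⊓ M (k + (j : ℤ) - 1))
  grSurj : ∀ (k : ℤ) (j : ℕ), ∀ y ∈ W k ⊓ M (k - (j : ℤ)),
      ∃ x ∈ W k ⊓ M (k + (j : ℤ)),
        y - (N ^ j) x ∈ (W (k - 1) ⊓ M (k - (j : ℤ))) ⊔ (W k ⊓ M (k - (j : ℤ) - 1))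



open Module in
private lemma grDim_eq' {K L : Type*} [Field K] [AddCommGroup L] [Module K L]
    [FiniteDimensional K L] (P Q : Submodule K L) (h : Q ≤ P) :
    (grDim P Q : ℤ) = (finrank K P : ℤ) - finrank K Q := by
  have hQP : Q ⊓ P = Q := inf_eq_left.mpr h
  have h1 : finrank K ((Q ⊓ P).comap P.subtype) = finrank K Q := by
    rw [hQP]
    exact (Submodule.comapSubtypeEquivOfLe h).finrank_eq
  have h2 : finrank K (grQ P Q) + finrank K ((Q ⊓ P).comap P.subtype) = finrank K P :=
    Submodule.finrank_quotient_add_finrank _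
  rw [h1] at h2
  unfold grDim
  omega

private lemma telescope' (g : ℤ → ℤ) (a b : ℤ) (hab : a ≤ b) :
    ∑ k ∈ Finset.Icc a b, (g k - g (k - 1)) = g b - g (a - 1) := by
  refine Int.le_induction
    (motive := fun b _ => ∑ k ∈ Finset.Icc a b, (g k - g (k - 1)) = g b - g (a - 1)) ?_ ?_ b hab
  · simp
  · intro n hn ih
    have h : Finset.Icc a (n + 1) = insert (n + 1) (Finset.Icc a n) := by
      ext x; simp; omega
    rw [h, Finset.sum_insert (by simp), ih]
    ring_nf

/-- Kashiwara splitting, weak form: if the relative weight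
filtration `M = M(N, W)` exists then for every `l`,
`dim Gr^M_l L = ∑_k dim Gr^M_l Gr^W_k L`, the double graded pieces being the
Zassenhaus subquotients `(W_k ∩ M_l)/(W_{k-1} ∩ M_l + W_k ∩ M_{l-1})`; the sum
is over the finite range where `W` jumps (`W_{a-1} = 0`, `W_b = L`). -/
theorem kashiwara_splitting_dim {K L : Type*} [Field K] [CharZero K]
    [AddCommGroup L] [Module K L] [FiniteDimensional K L]
    (N : Module.End K L) (hN : IsNilpotent N)
    (W M : ℤ → Submodule K L)
    (hM : IsRelativeWeightFiltration N W M)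
    (a b : ℤ) (ha : W (a - 1) = ⊥) (hb : W b = ⊤) (l : ℤ) :
    Module.finrank K (grQ (M l) (M (l - 1))) =
      ∑ k ∈ Finset.Icc a b,
        grDim (W k ⊓ M l) ((W (k - 1) ⊓ M l) ⊔ (W k ⊓ M (l - 1))) := by
  classical
  rcases le_or_gt a b with hab | hab
  · set f : ℤ → ℤ := fun k => (Module.finrank K ↥(W k ⊓ M l) : ℤ)
        - Module.finrank K ↥(W k ⊓ M (l - 1)) with hf
    have hMle : M (l - 1) ≤ M l := hM.monoM (by omega)
    have hterm : ∀ k ∈ Finset.Icc a b,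
        (grDim (W k ⊓ M l) ((W (k - 1) ⊓ M l) ⊔ (W k ⊓ M (l - 1))) : ℤ)
          = f k - f (k - 1) := by
      intro k _
      have hWle : W (k - 1) ≤ W k := hM.monoW (by omega)
      have hle : (W (k - 1) ⊓ M l) ⊔ (W k ⊓ M (l - 1)) ≤ W k ⊓ M l :=
        sup_le (inf_le_inf_right _ hWle) (inf_le_inf_left _ hMle)
      rw [grDim_eq' _ _ hle]
      have hinf : (W (k - 1) ⊓ M l) ⊓ (W k ⊓ M (l - 1)) = W (k - 1) ⊓ M (l - 1) := by
        apply le_antisymm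
        · exact le_inf (inf_le_left.trans inf_le_left) (inf_le_right.trans inf_le_right)
        · exact le_inf (le_inf inf_le_left (inf_le_right.trans hMle))
            (le_inf (inf_le_left.trans hWle) inf_le_right)
      have hsum := Submodule.finrank_sup_add_finrank_inf_eq
        (W (k - 1) ⊓ M l) (W k ⊓ M (l - 1))
      rw [hinf] at hsum
      simp only [hf]
      omega
    have hfb : f b = (Module.finrank K (M l) : ℤ) - Module.finrank K (M (l - 1)) := by
      simp only [hf]
      rw [hb, top_inf_eq, top_inf_eq]
    have hfa : f (a - 1) = 0 := by
      simp only [hf]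
      rw [ha, bot_inf_eq, bot_inf_eq]
      simp
    have key : ((∑ k ∈ Finset.Icc a b,
        grDim (W k ⊓ M l) ((W (k - 1) ⊓ M l) ⊔ (W k ⊓ M (l - 1))) : ℕ) : ℤ)
          = (Module.finrank K (M l) : ℤ) - Module.finrank K (M (l - 1)) := by
      push_cast
      rw [Finset.sum_congr rfl hterm, telescope' f a b hab, hfb, hfa, sub_zero]
    have hLHS : (Module.finrank K (grQ (M l) (M (l - 1))) : ℤ)
        = (Module.finrank K (M l) : ℤ) - Module.finrank K (M (l - 1)) :=
      grDim_eq' (M l) (M (l - 1)) hMle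
    exact_mod_cast hLHS.trans key.symm
  · have hLzero : ∀ x : L, x = 0 := by
      intro x
      have hx : x ∈ W b := by rw [hb]; trivial
      have hx2 : x ∈ W (a - 1) := hM.monoW (by omega) hx
      rwa [ha, Submodule.mem_bot] at hx2
    haveI : Subsingleton L := ⟨fun x y => by rw [hLzero x, hLzero y]⟩
    rw [Finset.Icc_eq_empty (by omega), Finset.sum_empty]
    have hMle : M (l - 1) ≤ M l := hM.monoM (by omega)
    have h1 : Module.finrank K ↥(M l) = 0 := Module.finrank_zero_of_subsingleton
    have h2 : Module.finrank K ↥(M (l - 1)) = 0 := Module.finrank_zero_of_subsingleton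
    have h3 := grDim_eq' (M l) (M (l - 1)) hMle
    rw [h1, h2] at h3
    have : (grDim (M l) (M (l - 1)) : ℤ) = 0 := by omega
    exact_mod_cast this
end

section
/- For a finite set I with |I| = n ≥ 1, let c_p denote the number of strictly decreasing chains I = s₁ ⊋ s₂ ⊋ ⋯ ⊋ s_p with s_p ≠ ∅ (so every chain starts at I and all terms are nonempty). Then ∑_{p ≥ 1} (-1)^{p-1} c_p = (-1)^{n-1}. -/
section

variable {I : Type*} [Fintype I] [DecidableEq I]

def Chains (T : Finset I) (p : ℕ) : Type _ :=
  {s : Fin p → Finset I // StrictAnti s ∧ (∀ h : 0 < p, s ⟨0, h⟩ = T) ∧ ∀ i, s i ≠ ∅}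

noncomputable instance (T : Finset I) (p : ℕ) : Fintype (Chains T p) := by
  classical exact Subtype.fintype _

omit [Fintype I] [DecidableEq I] in
lemma strictAnti_cons {T : Finset I} {p : ℕ} {t : Fin (p+1) → Finset I}
    (ht : StrictAnti t) (hlt : t 0 < T) :
    StrictAnti (Fin.cons T t : Fin (p+2) → Finset I) := by
  intro i j hij
  induction j using Fin.cases with
  | zero => exact absurd hij (by simp)
  | succ j' =>
    induction i using Fin.cases with
    | zero =>
      simpa using lt_of_le_of_lt (ht.antitone (Fin.zero_le j')) hlt
    | succ i' =>
      simpa using ht (by simpa [Fin.succ_lt_succ_iff] using hij)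

def fiberEquiv (T T' : Finset I) (hT' : T' ⊂ T) (p : ℕ) :
    {s : Chains T (p + 2) // s.1 1 = T'} ≃ Chains T' (p + 1) where
  toFun s := ⟨fun i => s.1.1 i.succ,
    fun i j h => s.1.2.1 (Fin.succ_lt_succ_iff.mpr h),
    fun h => by
      show s.1.1 (⟨0, h⟩ : Fin (p+1)).succ = T'
      rw [show ((⟨0, h⟩ : Fin (p+1)).succ) = 1 by ext; simp]
      exact s.2,
    fun i => s.1.2.2.2 _⟩
  invFun t := ⟨⟨Fin.cons T t.1,
    strictAnti_cons t.2.1 (by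
      rw [show (0 : Fin (p+1)) = ⟨0, by omega⟩ by ext; simp, t.2.2.1 (by omega)]
      exact hT'),
    fun h => rfl,
    by
      intro i
      induction i using Fin.cases with
      | zero =>
        simp only [Fin.cons_zero]
        intro h
        subst h
        exact absurd (lt_of_lt_of_le hT' (Finset.empty_subset _)) (lt_irrefl _)
      | succ i' => simpa using t.2.2.2 i'⟩,
    by
      show (Fin.cons T t.1 : Fin (p+2) → Finset I) 1 = T'
      rw [← Fin.succ_zero_eq_one, Fin.cons_succ]
      rw [show (0 : Fin (p+1)) = ⟨0, by omega⟩ by ext; simp]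
      exact t.2.2.1 (by omega)⟩
  left_inv s := by
    refine Subtype.ext (Subtype.ext (funext fun i => ?_))
    induction i using Fin.cases with
    | zero => simpa using (s.1.2.2.1 (by omega)).symm
    | succ i' => simp
  right_inv t := Subtype.ext (funext fun i => by simp)

lemma card_chains_succ (T : Finset I) (p : ℕ) :
    Fintype.card (Chains T (p + 2)) =
      ∑ T' ∈ T.ssubsets, Fintype.card (Chains T' (p + 1)) := by
  classical
  rw [Fintype.card_congr (Equiv.sigmaFiberEquiv (fun s : Chains T (p+2) => s.1 1)).symm,
    Fintype.card_sigma]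
  rw [show (Finset.univ : Finset (Finset I)) = Finset.univ from rfl]
  rw [← Finset.sum_subset (Finset.subset_univ T.ssubsets)]
  · refine Finset.sum_congr rfl fun T' hT' => ?_
    rw [Finset.mem_ssubsets] at hT'
    exact Fintype.card_congr (fiberEquiv T T' hT' p)
  · intro T' _ hT'
    rw [Finset.mem_ssubsets] at hT'
    rw [Fintype.card_eq_zero_iff]
    refine ⟨fun s => hT' ?_⟩
    rw [← s.2]
    have h1 := s.1.2.1 (show (⟨0, by omega⟩ : Fin (p+2)) < 1 by simp [Fin.lt_def])
    rw [s.1.2.2.1 (by omega)] at h1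
    exact h1

end

section
variable {I : Type*} [Fintype I] [DecidableEq I]

lemma card_chains_one (T : Finset I) (hT : T ≠ ∅) :
    Fintype.card (Chains T 1) = 1 := by
  rw [Fintype.card_eq_one_iff]
  refine ⟨⟨fun _ => T, fun i j h => absurd (Subsingleton.elim i j ▸ h) (lt_irrefl _),
    fun _ => rfl, fun _ => hT⟩, fun s => ?_⟩
  refine Subtype.ext (funext fun i => ?_)
  rw [Subsingleton.elim i (⟨0, by omega⟩ : Fin 1)]
  exact s.2.2.1 (by omega)

lemma card_chains_empty {p : ℕ} (hp : 1 ≤ p) :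
    Fintype.card (Chains (∅ : Finset I) p) = 0 := by
  rw [Fintype.card_eq_zero_iff]
  exact ⟨fun s => s.2.2.2 _ (s.2.2.1 (by omega))⟩

lemma card_chains_succ' (T : Finset I) {q : ℕ} (hq : 1 ≤ q) :
    Fintype.card (Chains T (q + 1)) =
      ∑ T' ∈ T.ssubsets, Fintype.card (Chains T' q) := by
  obtain ⟨r, rfl⟩ := Nat.exists_eq_add_of_le hq
  simp only [Nat.add_comm 1 r]
  exact card_chains_succ T r

lemma chains_sum : ∀ N : ℕ, ∀ T : Finset I, T.card = N → T.Nonempty →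
    ∀ m, N ≤ m →
    ∑ p ∈ Finset.Icc 1 m, (-1:ℤ)^(p-1) * (Fintype.card (Chains T p) : ℤ)
      = (-1)^(N-1) := by
  intro N
  induction N using Nat.strong_induction_on with
  | _ N IH =>
  intro T hTN hTne m hm
  have hN1 : 1 ≤ N := hTN ▸ Finset.card_pos.mpr hTne
  have hm1 : 1 ≤ m := le_trans hN1 hm
  have hsplit : Finset.Icc 1 m = insert 1 (Finset.Icc 2 m) := by
    ext x; simp; omega
  rw [hsplit, Finset.sum_insert (by simp)]
  rw [show Finset.Icc 2 m =
      Finset.map (addRightEmbedding 1) (Finset.Icc 1 (m-1)) by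
    rw [Finset.map_add_right_Icc]; congr 1; omega]
  rw [Finset.sum_map]
  simp only [addRightEmbedding_apply]
  -- rewrite each term via the recursion
  have hrec : ∀ q ∈ Finset.Icc 1 (m-1),
      (-1:ℤ)^(q+1-1) * (Fintype.card (Chains T (q+1)) : ℤ)
        = ∑ T' ∈ T.ssubsets, (-1:ℤ)^q * (Fintype.card (Chains T' q) : ℤ) := by
    intro q hq
    rw [Finset.mem_Icc] at hq
    rw [card_chains_succ' T hq.1, Nat.add_sub_cancel]
    push_cast
    rw [Finset.mul_sum]
  rw [Finset.sum_congr rfl hrec, Finset.sum_comm]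
  -- evaluate the inner sum per T'
  have hinner : ∀ T' ∈ T.ssubsets,
      ∑ q ∈ Finset.Icc 1 (m-1), (-1:ℤ)^q * (Fintype.card (Chains T' q) : ℤ)
        = (-1:ℤ)^(T'.card) - (if T' = ∅ then 1 else 0) := by
    intro T' hT'
    rw [Finset.mem_ssubsets] at hT'
    by_cases hTe : T' = ∅
    · subst hTe
      simp only [if_true, Finset.card_empty, pow_zero, sub_self]
      refine Finset.sum_eq_zero fun q hq => ?_
      rw [Finset.mem_Icc] at hq
      rw [card_chains_empty hq.1]
      simp
    · have hTne' : T'.Nonempty := Finset.nonempty_of_ne_empty hTe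
      have hcard_lt : T'.card < N := hTN ▸ Finset.card_lt_card hT'
      have hcard_le : T'.card ≤ m - 1 := by
        have := Finset.card_lt_card hT'
        omega
      have hIH := IH T'.card hcard_lt T' rfl hTne' (m-1) hcard_le
      have hc1 : 1 ≤ T'.card := Finset.card_pos.mpr hTne'
      calc ∑ q ∈ Finset.Icc 1 (m-1), (-1:ℤ)^q * (Fintype.card (Chains T' q) : ℤ)
          = ∑ q ∈ Finset.Icc 1 (m-1),
              -((-1:ℤ)^(q-1) * (Fintype.card (Chains T' q) : ℤ)) := by
            refine Finset.sum_congr rfl fun q hq => ?_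
            rw [Finset.mem_Icc] at hq
            have hpq : (-1:ℤ)^q = -(-1:ℤ)^(q-1) := by
              rw [show q = (q-1)+1 by omega, pow_succ, Nat.add_sub_cancel]
              ring
            rw [hpq]
            ring
        _ = -((-1:ℤ)^(T'.card - 1)) := by rw [Finset.sum_neg_distrib, hIH]
        _ = (-1:ℤ)^(T'.card) - (if T' = ∅ then 1 else 0) := by
            rw [if_neg hTe, sub_zero, show T'.card = (T'.card - 1) + 1 by omega,
              pow_succ, Nat.add_sub_cancel]
            ring
  rw [Finset.sum_congr rfl hinner]
  rw [Finset.sum_sub_distrib, Finset.sum_ite_eq' T.ssubsets (∅ : Finset I) (fun _ => (1:ℤ)),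
    if_pos (Finset.empty_mem_ssubsets hTne)]
  have hpow : ∑ T' ∈ T.ssubsets, (-1:ℤ)^(T'.card) = -(-1:ℤ)^N := by
    rw [show T.ssubsets = T.powerset.erase T from rfl,
      Finset.sum_erase_eq_sub (Finset.mem_powerset_self T),
      Finset.sum_powerset_neg_one_pow_card, if_neg (Finset.nonempty_iff_ne_empty.mp hTne),
      hTN]
    ring
  rw [hpow, card_chains_one T (Finset.nonempty_iff_ne_empty.mp hTne)]
  rw [show N = (N-1)+1 by omega, pow_succ, Nat.add_sub_cancel]
  push_cast
  ring

end

/-- for a finite set `I` with `|I| = n ≥ 1`, let `c p` be the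
number of strictly decreasing chains `I = s₁ ⊋ s₂ ⊋ ⋯ ⊋ s_p ≠ ∅` of
nonempty subsets of `I` starting at `I`.  Then
`∑_{p ≥ 1} (-1)^{p-1} c p = (-1)^{n-1}` (the sum taken over `1 ≤ p ≤ m` for
any `m ≥ n`, all further terms vanishing). -/
theorem chain_count_alternating_sum {I : Type*} [Fintype I] [DecidableEq I]
    (n : ℕ) (hn : Fintype.card I = n) (hn1 : 1 ≤ n)
    (c : ℕ → ℕ)
    (hc : ∀ p : ℕ, c p = Nat.card
      {s : Fin p → Finset I //
        StrictAnti s ∧ (∀ h : 0 < p, s ⟨0, h⟩ = Finset.univ) ∧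
          ∀ i, s i ≠ ∅}) :
    ∀ m : ℕ, n ≤ m →
      ∑ p ∈ Finset.Icc 1 m, (-1 : ℤ) ^ (p - 1) * (c p : ℤ) =
        (-1 : ℤ) ^ (n - 1) := by
  intro m hm
  haveI : Nonempty I := by
    rw [← Fintype.card_pos_iff, hn]; omega
  have h := chains_sum n (Finset.univ : Finset I)
    (by rw [Finset.card_univ, hn]) Finset.univ_nonempty m hm
  rw [← h]
  refine Finset.sum_congr rfl fun p _ => ?_
  congr 1
  rw [hc p]
  exact_mod_cast congrArg (Nat.cast : ℕ → ℤ)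
    (Nat.card_eq_fintype_card (α := Chains (Finset.univ : Finset I) p))
end
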